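/- arXiv:1811.00577 — 2 statements merged into one kernel-verified Lean document; each statement's English description precedes it below -/
import Mathlib

section
/- Scaling identity between the L0 and L1 dual functions: for q ∈ {0, 1} define the dual function d_q(μ, ν) := inf over measurable X : Ω → ℂ with |X(β)| ≤ Γ a.e. and z ∈ ℂᵖ of ‖X‖_{L_q} + Σᵢ νᵢ gᵢ(z) + Re[μᴴ(∫_Ω F(X(β), β) dβ − z)], for μ ∈ ℂᵖ and ν ∈ ℝ₊ᵐ. Assume F(0, β) = 0 for all β, each component of F is a Carathéodory integrand with integrable pointwise minima, and the saturation hypothesis: every minimizer x° of |x| + Re[μᴴ F(x, β)] over {|x| ≤ Γ} satisfies x° ≠ 0 ⟹ |x°| = Γ, for all μ ∈ ℂᵖ, β ∈ Ω. Then for all μ ∈ ℂᵖ and ν ∈ ℝ₊ᵐ, d₀(μ, ν) = (1/Γ) · d₁(Γμ, Γν). -/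
open MeasureTheory

noncomputable section

/-- The Lebesgue measure restricted to `Ω ⊆ ℝⁿ`. -/
def mOmega {n : ℕ} (Ω : Set (Fin n → ℝ)) : Measure (Fin n → ℝ) :=
  volume.restrict Ω

/-- The "L0-norm": the (restricted Lebesgue) measure of the support of `X`. -/
def L0norm {n : ℕ} (Ω : Set (Fin n → ℝ)) (X : (Fin n → ℝ) → ℂ) : ℝ :=
  (mOmega Ω {β | X β ≠ 0}).toReal

/-- `Re[μᴴ x]` for vectors `μ, x ∈ ℂᵖ`. -/
def reInner {p : ℕ} (μ x : Fin p → ℂ) : ℝ :=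
  (∑ i, (starRingEnd ℂ) (μ i) * x i).re

/-- The dual function of the `L_q`-norm minimization problem, for an abstract norm
functional `nrm` in place of `‖·‖_{L_q}`:  the infimum over measurable `X` with
`|X| ≤ Γ` a.e. and `z ∈ ℂᵖ` of
`nrm(X) + Σᵢ νᵢ gᵢ(z) + Re[μᴴ(∫_Ω F(X(β), β) dβ − z)]`, as an extended real. -/
def dualQ {n p m : ℕ} (Ω : Set (Fin n → ℝ)) (F : ℂ → (Fin n → ℝ) → Fin p → ℂ)
    (g : Fin m → (Fin p → ℂ) → ℝ) (Γ : ℝ) (nrm : ((Fin n → ℝ) → ℂ) → ℝ)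
    (μ : Fin p → ℂ) (ν : Fin m → ℝ) : EReal :=
  sInf ((fun Xz : ((Fin n → ℝ) → ℂ) × (Fin p → ℂ) =>
      ((nrm Xz.1 + ∑ i, ν i * g i Xz.2
        + reInner μ ((∫ β, F (Xz.1 β) β ∂(mOmega Ω)) - Xz.2) : ℝ) : EReal)) ''
    {Xz | Measurable Xz.1 ∧ ∀ᵐ β ∂(mOmega Ω), ‖Xz.1 β‖ ≤ Γ})

/-- The dual function of the L0-norm minimization problem. -/
def dual0 {n p m : ℕ} (Ω : Set (Fin n → ℝ)) (F : ℂ → (Fin n → ℝ) → Fin p → ℂ)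
    (g : Fin m → (Fin p → ℂ) → ℝ) (Γ : ℝ) (μ : Fin p → ℂ) (ν : Fin m → ℝ) : EReal :=
  dualQ Ω F g Γ (L0norm Ω) μ ν

/-- The dual function of the L1-norm minimization problem. -/
def dual1 {n p m : ℕ} (Ω : Set (Fin n → ℝ)) (F : ℂ → (Fin n → ℝ) → Fin p → ℂ)
    (g : Fin m → (Fin p → ℂ) → ℝ) (Γ : ℝ) (μ : Fin p → ℂ) (ν : Fin m → ℝ) : EReal :=
  dualQ Ω F g Γ (fun X => ∫ β, ‖X β‖ ∂(mOmega Ω)) μ ν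

/-!
Write `ψ_β(x) = Re[μᴴ F(x, β)]`. After dividing the L1 objective at `(Γμ, Γν)` by `Γ`, the two
objectives at `(X, z)` differ only in `‖X‖_{L0}` versus `Γ⁻¹ ‖X‖_{L1}`. Since
`|x| ≤ Γ · 1_{x ≠ 0}` when `|x| ≤ Γ`, the scaled L1 objective never exceeds the L0 one.
Conversely, by saturation the pointwise problem `min_{|x| ≤ Γ} (|x| + Γ ψ_β(x))` has a minimizer
`x₀` with `|x₀| ∈ {0, Γ}`, hence `Γ⁻¹ |x₀| = 1_{x₀ ≠ 0}`: the integral of `Γ⁻¹` times the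
pointwise minimum lies below every scaled L1 objective and is the L0 objective of a pointwise
minimizer. An `ε`-minimizer is chosen measurably by taking, for each `β`, the first good point of
a countable set made of `0` and a dense subset of the circle `|x| = Γ`.
-/

open Set Metric

def reInnerCLM {p : ℕ} (μ : Fin p → ℂ) : (Fin p → ℂ) →L[ℝ] ℝ :=
  LinearMap.toContinuousLinearMap
    { toFun := reInner μ
      map_add' := fun x y => by simp [reInner, mul_add, Finset.sum_add_distrib]
      map_smul' := fun r x => by simp [reInner, Finset.mul_sum, mul_left_comm] }

lemma reInner_sub {p : ℕ} (μ x y : Fin p → ℂ) : reInner μ (x - y) = reInner μ x - reInner μ y :=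
  (reInnerCLM μ).map_sub x y

lemma reInner_ofReal_mul {p : ℕ} (c : ℝ) (μ x : Fin p → ℂ) :
    reInner (fun i => (c : ℂ) * μ i) x = c * reInner μ x := by
  simp [reInner, Finset.mul_sum, mul_assoc]

lemma EReal.coe_mul_sInf_of_pos {c : ℝ} (hc : 0 < c) (S : Set EReal) :
    (c : EReal) * sInf S = sInf ((fun x => (c : EReal) * x) '' S) :=
  have hc0 : (c : EReal) ≠ 0 := EReal.coe_ne_zero.2 hc.ne'
  Monotone.map_sInf_of_continuousAt
    ((EReal.continuousAt_mul (.inl hc0) (.inl hc0) (.inl (EReal.coe_ne_bot c))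
      (.inl (EReal.coe_ne_top c))).comp (continuousAt_const.prodMk continuousAt_id))
    (fun _ _ h => mul_le_mul_of_nonneg_left h (by exact_mod_cast hc.le))
    (EReal.coe_mul_top_of_pos hc)

lemma sInf_image_coe_eq_of_le_of_approx {α : Type*} {s : Set α} {f g : α → ℝ}
    (hle : ∀ a ∈ s, g a ≤ f a) (happrox : ∀ a ∈ s, ∀ ε > 0, ∃ a' ∈ s, f a' ≤ g a + ε) :
    sInf ((fun a => (f a : EReal)) '' s) = sInf ((fun a => (g a : EReal)) '' s) := by
  simp only [sInf_image]
  refine le_antisymm (le_iInf₂ fun a ha => EReal.le_of_forall_lt_iff_le.1 fun z hz => ?_)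
    (iInf₂_mono fun a ha => EReal.coe_le_coe_iff.2 (hle a ha))
  obtain ⟨a', ha', hfa'⟩ := happrox a ha (z - g a) (by linarith [EReal.coe_lt_coe_iff.1 hz])
  exact (iInf₂_le a' ha').trans (EReal.coe_le_coe_iff.2 (by linarith))

theorem exists_measurable_selection_le {α E : Type*} [MeasurableSpace α] [MeasurableSpace E]
    {μ : Measure α} {D : Set E} (hD : D.Countable) (hDne : D.Nonempty) {c : E → α → ℝ}
    (hc : ∀ y ∈ D, Measurable (c y)) {M : α → ℝ} (hM : AEMeasurable M μ)
    (hex : ∀ᵐ a ∂μ, ∃ y ∈ D, c y a ≤ M a) :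
    ∃ X : α → E, Measurable X ∧ (∀ a, X a ∈ D) ∧ ∀ᵐ a ∂μ, c (X a) a ≤ M a := by
  classical
  obtain ⟨v, rfl⟩ := hD.exists_eq_range hDne
  set M' := hM.mk M
  -- the second disjunct makes the search for a good index total, hence measurable
  let good : ℕ → α → Prop := fun k a => c (v k) a ≤ M' a ∨ ∀ j, ¬c (v j) a ≤ M' a
  have hgood : ∀ a, ∃ k, good k a := fun a =>
    (em (∃ j, c (v j) a ≤ M' a)).elim (fun ⟨j, hj⟩ => ⟨j, .inl hj⟩)
      fun h => ⟨0, .inr fun j hj => h ⟨j, hj⟩⟩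
  have hle : ∀ j, MeasurableSet {a | c (v j) a ≤ M' a} := fun j =>
    measurableSet_le (hc _ (mem_range_self j)) hM.measurable_mk
  have hgood_meas : ∀ k, MeasurableSet {a | good k a} := fun k => by
    simp only [good, ofPred_or, ofPred_forall]
    exact (hle k).union (.iInter fun j => (hle j).compl)
  refine ⟨fun a => v (Nat.find (hgood a)), Measurable.find (fun k => measurable_const)
    hgood_meas hgood, fun a => mem_range_self _, ?_⟩
  filter_upwards [hex, hM.ae_eq_mk] with a ⟨_, ⟨j, rfl⟩, hj⟩ hMa
  rw [hMa] at hj ⊢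
  exact (Nat.find_spec (hgood a)).resolve_right fun h => h j hj

def infNormAdd (Γ : ℝ) (φ : ℂ → ℝ) : ℝ :=
  sInf ((fun x => ‖x‖ + φ x) '' {x : ℂ | ‖x‖ ≤ Γ})

def IsSaturated (Γ : ℝ) (φ : ℂ → ℝ) : Prop :=
  ∀ x : ℂ, ‖x‖ ≤ Γ → (∀ x' : ℂ, ‖x'‖ ≤ Γ → ‖x‖ + φ x ≤ ‖x'‖ + φ x') → x ≠ 0 → ‖x‖ = Γ

section Pointwise

variable {Γ : ℝ} {ψ : ℂ → ℝ}

lemma isCompact_norm_le (Γ : ℝ) : IsCompact {x : ℂ | ‖x‖ ≤ Γ} := by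
  simpa [closedBall, dist_zero_right] using isCompact_closedBall (0 : ℂ) Γ

lemma inv_mul_infNormAdd_le (hΓ : 0 < Γ) (hψ : Continuous ψ) {x : ℂ} (hx : ‖x‖ ≤ Γ) :
    Γ⁻¹ * infNormAdd Γ (fun x => Γ * ψ x) ≤ Γ⁻¹ * ‖x‖ + ψ x := by
  have hcont : Continuous fun x : ℂ => ‖x‖ + Γ * ψ x := by fun_prop
  have hbdd := (isCompact_norm_le Γ).bddBelow_image hcont.continuousOn
  calc Γ⁻¹ * infNormAdd Γ (fun x => Γ * ψ x) ≤ Γ⁻¹ * (‖x‖ + Γ * ψ x) :=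
        mul_le_mul_of_nonneg_left (csInf_le hbdd ⟨x, hx, rfl⟩) (inv_nonneg.2 hΓ.le)
    _ = Γ⁻¹ * ‖x‖ + ψ x := by field_simp

lemma exists_saturated_eq_inv_mul_infNormAdd (hΓ : 0 < Γ) (hψ : Continuous ψ)
    (hsat : IsSaturated Γ fun x => Γ * ψ x) :
    ∃ x₀ : ℂ, (x₀ = 0 ∨ ‖x₀‖ = Γ) ∧
      (if x₀ = 0 then 0 else 1) + ψ x₀ = Γ⁻¹ * infNormAdd Γ (fun x => Γ * ψ x) := by
  have hcont : Continuous fun x : ℂ => ‖x‖ + Γ * ψ x := by fun_prop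
  obtain ⟨x₀, hx₀, hmin⟩ :=
    (isCompact_norm_le Γ).exists_isMinOn ⟨0, by simpa using hΓ.le⟩ hcont.continuousOn
  have hinf : infNormAdd Γ (fun x => Γ * ψ x) = ‖x₀‖ + Γ * ψ x₀ :=
    IsLeast.csInf_eq ⟨mem_image_of_mem _ hx₀, forall_mem_image.2 fun x hx => hmin hx⟩
  refine ⟨x₀, or_iff_not_imp_left.2 (hsat x₀ hx₀ fun x' hx' => hmin hx'), ?_⟩
  rw [hinf]
  by_cases h0 : x₀ = 0
  · simp [h0, hΓ.ne']
  · rw [if_neg h0, hsat x₀ hx₀ (fun x' hx' => hmin hx') h0]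
    field_simp

lemma exists_mem_insert_zero_cost_lt (hΓ : 0 < Γ) {T : Set ℂ} (hT : T ⊆ sphere 0 Γ)
    (hTd : sphere 0 Γ ⊆ closure T) (hψ : Continuous ψ) {x₀ : ℂ}
    (hx₀ : x₀ = 0 ∨ ‖x₀‖ = Γ) {ε : ℝ} (hε : 0 < ε) :
    ∃ y ∈ insert 0 T,
      (if y = 0 then 0 else 1) + ψ y < (if x₀ = 0 then (0 : ℝ) else 1) + ψ x₀ + ε := by
  rcases hx₀ with rfl | hx₀
  · exact ⟨0, mem_insert _ _, by simpa using hε⟩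
  have hx₀T : x₀ ∈ closure T := hTd (mem_sphere_zero_iff_norm.2 hx₀)
  obtain ⟨y, hyψ, hyT⟩ := mem_closure_iff.1 hx₀T {y | ψ y < ψ x₀ + ε}
    (isOpen_lt hψ continuous_const) (by simpa using hε)
  have hx₀0 : x₀ ≠ 0 := ne_of_mem_sphere (mem_sphere_zero_iff_norm.2 hx₀) hΓ.ne'
  have hy0 : y ≠ 0 := ne_of_mem_sphere (hT hyT) hΓ.ne'
  refine ⟨y, mem_insert_of_mem _ hyT, ?_⟩
  rw [if_neg hy0, if_neg hx₀0]
  linarith [mem_ofPred_eq ▸ hyψ]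

end Pointwise

section Integrals

variable {n p : ℕ} {Ω : Set (Fin n → ℝ)} {F : ℂ → (Fin n → ℝ) → Fin p → ℂ} {Γ : ℝ}

lemma ae_mem_mOmega (hΩ : MeasurableSet Ω) : ∀ᵐ β ∂(mOmega Ω), β ∈ Ω :=
  ae_restrict_mem hΩ

lemma reInner_integral (μ : Fin p → ℂ) {f : (Fin n → ℝ) → Fin p → ℂ}
    (hf : Integrable f (mOmega Ω)) :
    reInner μ (∫ β, f β ∂(mOmega Ω)) = ∫ β, reInner μ (f β) ∂(mOmega Ω) :=
  ((reInnerCLM μ).integral_comp_comm hf).symm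

lemma continuous_reInner_comp (μ : Fin p → ℂ) {β : Fin n → ℝ}
    (hFc : ∀ i, Continuous fun x => F x β i) : Continuous fun x => reInner μ (F x β) :=
  (reInnerCLM μ).continuous.comp (continuous_pi hFc)

lemma L0norm_eq_integral {X : (Fin n → ℝ) → ℂ} (hX : Measurable X) :
    L0norm Ω X = ∫ β, (if X β = 0 then 0 else 1) ∂(mOmega Ω) := by
  have hs : MeasurableSet {β | X β ≠ 0} := (hX (measurableSet_singleton 0)).compl
  rw [L0norm, ← measureReal_def, ← integral_indicator_one hs]
  congr 1 with β
  by_cases h : X β = 0 <;> simp [h]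

lemma exists_measurable_ae_cost_le (hΓ : 0 < Γ) (hΩ : MeasurableSet Ω)
    (hFc : ∀ β ∈ Ω, ∀ i, Continuous fun x => F x β i)
    (hFm : ∀ (x : ℂ) i, Measurable fun β => F x β i) (μ : Fin p → ℂ)
    (hsat : ∀ β ∈ Ω, IsSaturated Γ fun x => Γ * reInner μ (F x β))
    (hM : AEMeasurable (fun β => infNormAdd Γ fun x => Γ * reInner μ (F x β)) (mOmega Ω))
    {ε : ℝ} (hε : 0 < ε) :
    ∃ X : (Fin n → ℝ) → ℂ, Measurable X ∧ (∀ β, ‖X β‖ ≤ Γ) ∧ ∀ᵐ β ∂(mOmega Ω),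
      (if X β = 0 then 0 else 1) + reInner μ (F (X β) β)
        ≤ Γ⁻¹ * infNormAdd Γ (fun x => Γ * reInner μ (F x β)) + ε := by
  obtain ⟨T, hTs, hTc, hTd⟩ := (TopologicalSpace.IsSeparable.of_separableSpace
    (sphere (0 : ℂ) Γ)).exists_countable_dense_subset
  have hcost : ∀ y : ℂ, Measurable fun β => (if y = 0 then 0 else 1) + reInner μ (F y β) :=
    fun y => measurable_const.add
      ((reInnerCLM μ).measurable.comp (measurable_pi_lambda _ (hFm y)))
  obtain ⟨X, hX, hXD, hXle⟩ := exists_measurable_selection_le (hTc.insert 0)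
    (insert_nonempty 0 T) (fun y _ => hcost y) ((hM.const_mul Γ⁻¹).add_const ε) (by
      filter_upwards [ae_mem_mOmega hΩ] with β hβ
      have hψ := continuous_reInner_comp μ (hFc β hβ)
      obtain ⟨x₀, hx₀, heq⟩ := exists_saturated_eq_inv_mul_infNormAdd hΓ hψ (hsat β hβ)
      obtain ⟨y, hy, hlt⟩ := exists_mem_insert_zero_cost_lt hΓ hTs hTd hψ hx₀ hε
      exact ⟨y, hy, heq ▸ hlt.le⟩)
  refine ⟨X, hX, fun β => ?_, hXle⟩
  rcases hXD β with h | h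
  · simp [h, hΓ.le]
  · exact (mem_sphere_zero_iff_norm.1 (hTs h)).le

variable [IsFiniteMeasure (mOmega Ω)]

lemma integrable_ite_eq_zero {X : (Fin n → ℝ) → ℂ} (hX : Measurable X) :
    Integrable (fun β => if X β = 0 then (0 : ℝ) else 1) (mOmega Ω) :=
  have hmeas : Measurable fun β => if X β = 0 then (0 : ℝ) else 1 :=
    Measurable.ite (hX (measurableSet_singleton 0)) measurable_const measurable_const
  Integrable.of_bound hmeas.aestronglyMeasurable 1
    (ae_of_all _ fun β => by by_cases h : X β = 0 <;> simp [h])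

lemma integral_norm_le_mul_L0norm {X : (Fin n → ℝ) → ℂ} (hX : Measurable X)
    (hXb : ∀ᵐ β ∂(mOmega Ω), ‖X β‖ ≤ Γ) :
    ∫ β, ‖X β‖ ∂(mOmega Ω) ≤ Γ * L0norm Ω X := by
  rw [L0norm_eq_integral hX, ← integral_const_mul]
  refine integral_mono_of_nonneg (ae_of_all _ fun β => norm_nonneg _)
    ((integrable_ite_eq_zero hX).const_mul Γ) ?_
  filter_upwards [hXb] with β hβ
  by_cases h : X β = 0 <;> simp [h, hβ]

lemma integral_inv_mul_infNormAdd_le (hΓ : 0 < Γ) (hΩ : MeasurableSet Ω)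
    (hFc : ∀ β ∈ Ω, ∀ i, Continuous fun x => F x β i) (μ : Fin p → ℂ)
    (hM : Integrable (fun β => infNormAdd Γ fun x => Γ * reInner μ (F x β)) (mOmega Ω))
    {X : (Fin n → ℝ) → ℂ} (hX : Measurable X) (hXb : ∀ᵐ β ∂(mOmega Ω), ‖X β‖ ≤ Γ)
    (hFX : Integrable (fun β => F (X β) β) (mOmega Ω)) :
    ∫ β, Γ⁻¹ * infNormAdd Γ (fun x => Γ * reInner μ (F x β)) ∂(mOmega Ω)
      ≤ Γ⁻¹ * ∫ β, ‖X β‖ ∂(mOmega Ω) + reInner μ (∫ β, F (X β) β ∂(mOmega Ω)) := by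
  have hnorm : Integrable (fun β => ‖X β‖) (mOmega Ω) :=
    (Integrable.of_bound hX.aestronglyMeasurable Γ hXb).norm
  have hre : Integrable (fun β => reInner μ (F (X β) β)) (mOmega Ω) :=
    (reInnerCLM μ).integrable_comp hFX
  calc ∫ β, Γ⁻¹ * infNormAdd Γ (fun x => Γ * reInner μ (F x β)) ∂(mOmega Ω)
      ≤ ∫ β, (Γ⁻¹ * ‖X β‖ + reInner μ (F (X β) β)) ∂(mOmega Ω) := by
        refine integral_mono_ae (hM.const_mul _) ((hnorm.const_mul _).add hre) ?_
        filter_upwards [hXb, ae_mem_mOmega hΩ] with β hβX hβ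
        exact inv_mul_infNormAdd_le hΓ (continuous_reInner_comp μ (hFc β hβ)) hβX
    _ = _ := by
        rw [integral_add (hnorm.const_mul _) hre, integral_const_mul, reInner_integral μ hFX]

lemma exists_L0norm_add_reInner_le (hΓ : 0 < Γ) (hΩ : MeasurableSet Ω)
    (hFc : ∀ β ∈ Ω, ∀ i, Continuous fun x => F x β i)
    (hFm : ∀ (x : ℂ) i, Measurable fun β => F x β i) (μ : Fin p → ℂ)
    (hsat : ∀ β ∈ Ω, IsSaturated Γ fun x => Γ * reInner μ (F x β))
    (hM : Integrable (fun β => infNormAdd Γ fun x => Γ * reInner μ (F x β)) (mOmega Ω))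
    (hintF : ∀ X : (Fin n → ℝ) → ℂ, Measurable X → (∀ᵐ β ∂(mOmega Ω), ‖X β‖ ≤ Γ) →
      Integrable (fun β => F (X β) β) (mOmega Ω))
    {ε : ℝ} (hε : 0 < ε) :
    ∃ X : (Fin n → ℝ) → ℂ, Measurable X ∧ (∀ β, ‖X β‖ ≤ Γ) ∧
      L0norm Ω X + reInner μ (∫ β, F (X β) β ∂(mOmega Ω))
        ≤ ∫ β, Γ⁻¹ * infNormAdd Γ (fun x => Γ * reInner μ (F x β)) ∂(mOmega Ω) + ε := by
  set c := (mOmega Ω).real univ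
  have hε' : 0 < ε / (c + 1) := div_pos hε (by positivity)
  obtain ⟨X, hX, hXb, hXle⟩ := exists_measurable_ae_cost_le hΓ hΩ hFc hFm μ hsat
    hM.aemeasurable hε'
  have hFX := hintF X hX (ae_of_all _ hXb)
  have hind := integrable_ite_eq_zero (Ω := Ω) hX
  have hre : Integrable (fun β => reInner μ (F (X β) β)) (mOmega Ω) :=
    (reInnerCLM μ).integrable_comp hFX
  refine ⟨X, hX, hXb, ?_⟩
  calc L0norm Ω X + reInner μ (∫ β, F (X β) β ∂(mOmega Ω))
      = ∫ β, ((if X β = 0 then 0 else 1) + reInner μ (F (X β) β)) ∂(mOmega Ω) := by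
        rw [integral_add hind hre, L0norm_eq_integral hX, reInner_integral μ hFX]
    _ ≤ ∫ β, (Γ⁻¹ * infNormAdd Γ (fun x => Γ * reInner μ (F x β)) + ε / (c + 1))
          ∂(mOmega Ω) :=
        integral_mono_ae (hind.add hre) ((hM.const_mul _).add (integrable_const _)) hXle
    _ = ∫ β, Γ⁻¹ * infNormAdd Γ (fun x => Γ * reInner μ (F x β)) ∂(mOmega Ω)
          + c * (ε / (c + 1)) := by
        rw [integral_add (hM.const_mul _) (integrable_const _), integral_const, smul_eq_mul]
    _ ≤ _ := by
        gcongr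
        rw [mul_div_assoc', div_le_iff₀ (by positivity)]
        nlinarith

end Integrals

lemma one_div_mul_scaled_objective {m p : ℕ} {Γ : ℝ} (hΓ : Γ ≠ 0) (a : ℝ) (ν t : Fin m → ℝ)
    (μ w : Fin p → ℂ) :
    1 / Γ * (a + ∑ i, Γ * ν i * t i + reInner (fun i => (Γ : ℂ) * μ i) w)
      = Γ⁻¹ * a + ∑ i, ν i * t i + reInner μ w := by
  simp only [reInner_ofReal_mul, mul_assoc, ← Finset.mul_sum]
  field_simp

theorem dual_scaling_identity_general
    {n p m : ℕ} (Ω : Set (Fin n → ℝ)) (hΩ : IsCompact Ω)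
    (F : ℂ → (Fin n → ℝ) → Fin p → ℂ) (g : Fin m → (Fin p → ℂ) → ℝ)
    (Γ : ℝ) (hΓ : 0 < Γ)
    (hFc : ∀ β ∈ Ω, ∀ i, Continuous fun x => F x β i)
    (hFm : ∀ (x : ℂ) i, Measurable fun β => F x β i)
    (hintmin : ∀ μ : Fin p → ℂ, Integrable (fun β =>
      sInf ((fun x => ‖x‖ + reInner μ (F x β)) '' {x : ℂ | ‖x‖ ≤ Γ}))
      (mOmega Ω))
    (hintF : ∀ X : (Fin n → ℝ) → ℂ, Measurable X →
      (∀ᵐ β ∂(mOmega Ω), ‖X β‖ ≤ Γ) →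
      Integrable (fun β => F (X β) β) (mOmega Ω))
    (hsat : ∀ (μ : Fin p → ℂ), ∀ β ∈ Ω, ∀ x : ℂ, ‖x‖ ≤ Γ →
      (∀ x' : ℂ, ‖x'‖ ≤ Γ →
        ‖x‖ + reInner μ (F x β) ≤ ‖x'‖ + reInner μ (F x' β)) →
      x ≠ 0 → ‖x‖ = Γ) :
    ∀ (μ : Fin p → ℂ) (ν : Fin m → ℝ), (∀ i, 0 ≤ ν i) →
      dual0 Ω F g Γ μ ν
        = ((1 / Γ : ℝ) : EReal)
          * dual1 Ω F g Γ (fun i => (Γ : ℂ) * μ i) (fun i => Γ * ν i) := by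
  intro μ ν _
  have : IsFiniteMeasure (mOmega Ω) := ⟨by simpa [mOmega] using hΩ.measure_lt_top⟩
  have hsatμ : ∀ β ∈ Ω, IsSaturated Γ fun x => Γ * reInner μ (F x β) := fun β hβ => by
    simpa only [IsSaturated, reInner_ofReal_mul] using hsat (fun i => (Γ : ℂ) * μ i) β hβ
  have hM : Integrable (fun β => infNormAdd Γ fun x => Γ * reInner μ (F x β)) (mOmega Ω) := by
    simpa only [infNormAdd, reInner_ofReal_mul] using hintmin fun i => (Γ : ℂ) * μ i
  rw [dual0, dual1, dualQ, dualQ, EReal.coe_mul_sInf_of_pos (one_div_pos.2 hΓ), image_image]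
  simp only [← EReal.coe_mul, one_div_mul_scaled_objective hΓ.ne']
  refine sInf_image_coe_eq_of_le_of_approx ?_ ?_
  · rintro ⟨X, z⟩ ⟨hX, hXb⟩
    have := integral_norm_le_mul_L0norm hX hXb
    gcongr
    rwa [inv_mul_le_iff₀ hΓ]
  · rintro ⟨X, z⟩ ⟨hX, hXb⟩ ε hε
    obtain ⟨X', hX', hX'b, hle⟩ := exists_L0norm_add_reInner_le hΓ hΩ.measurableSet hFc hFm μ
      hsatμ hM hintF hε
    have := integral_inv_mul_infNormAdd_le hΓ hΩ.measurableSet hFc μ hM hX hXb (hintF X hX hXb)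
    refine ⟨(X', z), ⟨hX', ae_of_all _ hX'b⟩, ?_⟩
    simp only [reInner_sub]
    linarith

/-- **Scaling identity between the L0 and L1 dual functions:**
`d₀(μ, ν) = (1/Γ) · d₁(Γμ, Γν)` for all `μ ∈ ℂᵖ`, `ν ∈ ℝ₊ᵐ`, under the saturation
hypothesis, `F(0, ·) = 0`, and Carathéodory/integrability assumptions. -/
theorem dual_scaling_identity
    {n p m : ℕ} (Ω : Set (Fin n → ℝ)) (hΩ : IsCompact Ω)
    (F : ℂ → (Fin n → ℝ) → Fin p → ℂ) (g : Fin m → (Fin p → ℂ) → ℝ)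
    (hg : ∀ i, ConvexOn ℝ Set.univ (g i))
    (Γ : ℝ) (hΓ : 0 < Γ)
    (hF0 : ∀ β, F 0 β = 0)
    (hFc : ∀ β ∈ Ω, ∀ i, Continuous fun x => F x β i)
    (hFm : ∀ (x : ℂ) i, Measurable fun β => F x β i)
    (hintmin : ∀ μ : Fin p → ℂ, Integrable (fun β =>
      sInf ((fun x => ‖x‖ + reInner μ (F x β)) '' {x : ℂ | ‖x‖ ≤ Γ}))
      (mOmega Ω))
    (hintF : ∀ X : (Fin n → ℝ) → ℂ, Measurable X →
      (∀ᵐ β ∂(mOmega Ω), ‖X β‖ ≤ Γ) →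
      Integrable (fun β => F (X β) β) (mOmega Ω))
    (hsat : ∀ (μ : Fin p → ℂ), ∀ β ∈ Ω, ∀ x : ℂ, ‖x‖ ≤ Γ →
      (∀ x' : ℂ, ‖x'‖ ≤ Γ →
        ‖x‖ + reInner μ (F x β) ≤ ‖x'‖ + reInner μ (F x' β)) →
      x ≠ 0 → ‖x‖ = Γ) :
    ∀ (μ : Fin p → ℂ) (ν : Fin m → ℝ), (∀ i, 0 ≤ ν i) →
      dual0 Ω F g Γ μ ν
        = ((1 / Γ : ℝ) : EReal)
          * dual1 Ω F g Γ (fun i => (Γ : ℂ) * μ i) (fun i => Γ * ν i) :=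
  dual_scaling_identity_general Ω hΩ F g Γ hΓ hFc hFm hintmin hintF hsat
end
end

section
/- Optimal value of the example L0 problem: let Γ > 0 and y₁, y₂ ∈ ℝ with |y₁| < Γ/2 and |y₂| < Γ/2. Then the infimum of ‖X‖_{L0} = 𝔪({β ∈ [0,1] : X(β) ≠ 0}) over all measurable X : [0,1] → ℝ with |X(β)| ≤ Γ a.e., ∫₀^{1/2} X(β) dβ = y₁, and ∫_{1/2}^{1} X(β) dβ = y₂ equals (|y₁| + |y₂|)/Γ, and it is attained by X_Γ(β) := Γ·sign(y₁)·1_{A₁}(β) + Γ·sign(y₂)·1_{A₂}(β) for any measurable A₁ ⊆ [0,1/2], A₂ ⊆ [1/2,1] with 𝔪(A₁) = |y₁|/Γ and 𝔪(A₂) = |y₂|/Γ. -/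
/-!
If `|X| ≤ Γ` on a set of finite measure, then `|∫ X| ≤ Γ · 𝔪(supp X)` there, because `X` vanishes
off its support. The two halves of `[0, 1]` meet only in the null set `{1/2}`, so adding these bounds
gives `|y₁| + |y₂| ≤ Γ ‖X‖_{L0}` for every feasible `X`. Conversely `X_Γ` is feasible and is supported
in `A₁ ∪ A₂`, whose measure is at most `(|y₁| + |y₂|) / Γ`, so it attains the bound.
-/

open MeasureTheory

noncomputable section

/-- The function `X_Γ = Γ·sign(y₁)·1_{A₁} + Γ·sign(y₂)·1_{A₂}`. -/
def XGamma (Γ y₁ y₂ : ℝ) (A₁ A₂ : Set ℝ) (β : ℝ) : ℝ :=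
  Γ * Real.sign y₁ * Set.indicator A₁ (fun _ => (1 : ℝ)) β
    + Γ * Real.sign y₂ * Set.indicator A₂ (fun _ => (1 : ℝ)) β

open Set Function
open scoped ENNReal

theorem Real.abs_sign_le_one (r : ℝ) : |Real.sign r| ≤ 1 := by
  rcases Real.sign_apply_eq r with h | h | h <;> simp [h]

theorem Real.sign_mul_abs (r : ℝ) : Real.sign r * |r| = r := by
  rcases lt_trichotomy r 0 with h | rfl | h
  · rw [Real.sign_of_neg h, abs_of_neg h, neg_one_mul, neg_neg]
  · simp
  · rw [Real.sign_of_pos h, abs_of_pos h, one_mul]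

theorem aedisjoint_of_subset_Icc_of_subset_Icc {a b c : ℝ} {s t : Set ℝ}
    (hs : s ⊆ Icc a b) (ht : t ⊆ Icc b c) : AEDisjoint volume s t :=
  measure_mono_null (fun _ hx => le_antisymm (hs hx.1).2 (ht hx.2).1) (Real.volume_singleton (a := b))

theorem measureReal_eq_of_eq_ofReal {α : Type*} [MeasurableSpace α] {μ : Measure α} {s : Set α}
    {r : ℝ} (hr : 0 ≤ r) (h : μ s = ENNReal.ofReal r) : μ.real s = r := by
  rw [measureReal_def, h, ENNReal.toReal_ofReal hr]

section SupportBound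

variable {α : Type*} [MeasurableSpace α] {μ : Measure α} {s t : Set α} {f : α → ℝ} {C : ℝ}

theorem abs_setIntegral_le_mul_measureReal_inter_support (hs : MeasurableSet s) (hμs : μ s ≠ ∞)
    (hC : ∀ᵐ x ∂μ.restrict s, |f x| ≤ C) :
    |∫ x in s, f x ∂μ| ≤ C * μ.real (s ∩ support f) := by
  rw [setIntegral_eq_of_subset_of_forall_sdiff_eq_zero (f := f) hs inter_subset_left
    fun x hx => notMem_support.1 fun hfx => hx.2 ⟨hx.1, hfx⟩]
  have hbound : ∀ᵐ x ∂μ, x ∈ s ∩ support f → ‖f x‖ ≤ C := by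
    filter_upwards [(ae_restrict_iff' hs).1 hC] with x hx hxs using hx hxs.1
  exact norm_setIntegral_le_of_norm_le_const_ae'
    ((measure_mono inter_subset_left).trans_lt hμs.lt_top) hbound

theorem abs_add_abs_setIntegral_le_mul_measureReal_inter_support (hf : Measurable f)
    (hs : MeasurableSet s) (ht : MeasurableSet t) (hst : AEDisjoint μ s t)
    (hμs : μ s ≠ ∞) (hμt : μ t ≠ ∞) (hC : ∀ᵐ x ∂μ.restrict (s ∪ t), |f x| ≤ C) :
    |∫ x in s, f x ∂μ| + |∫ x in t, f x ∂μ| ≤ C * μ.real ((s ∪ t) ∩ support f) := by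
  have hsf := abs_setIntegral_le_mul_measureReal_inter_support hs hμs
    (ae_restrict_of_ae_restrict_of_subset subset_union_left hC)
  have htf := abs_setIntegral_le_mul_measureReal_inter_support ht hμt
    (ae_restrict_of_ae_restrict_of_subset subset_union_right hC)
  have hsplit : μ.real ((s ∪ t) ∩ support f) = μ.real (s ∩ support f) + μ.real (t ∩ support f) := by
    rw [union_inter_distrib_right]
    exact measureReal_union₀ (ht.inter (measurableSet_support hf)).nullMeasurableSet
      (hst.mono inter_subset_left inter_subset_left)
  rw [hsplit, mul_add]
  exact add_le_add hsf htf

end SupportBound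

section XGamma

variable {Γ y₁ y₂ : ℝ} {A₁ A₂ : Set ℝ}

theorem measurable_XGamma (hA₁ : MeasurableSet A₁) (hA₂ : MeasurableSet A₂) :
    Measurable (XGamma Γ y₁ y₂ A₁ A₂) :=
  (measurable_const.mul (measurable_const.indicator hA₁)).add
    (measurable_const.mul (measurable_const.indicator hA₂))

theorem abs_XGamma_le (hΓ : 0 ≤ Γ) {β : ℝ} (hβ : β ∉ A₁ ∩ A₂) :
    |XGamma Γ y₁ y₂ A₁ A₂ β| ≤ Γ := by
  have hcoef (y : ℝ) : |Γ * Real.sign y| ≤ Γ := by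
    rw [abs_mul, abs_of_nonneg hΓ]
    exact mul_le_of_le_one_right hΓ (Real.abs_sign_le_one y)
  by_cases h₁ : β ∈ A₁
  · have h₂ : β ∉ A₂ := fun h₂ => hβ ⟨h₁, h₂⟩
    simpa [XGamma, h₁, h₂] using hcoef y₁
  · by_cases h₂ : β ∈ A₂
    · simpa [XGamma, h₁, h₂] using hcoef y₂
    · simpa [XGamma, h₁, h₂] using hΓ

theorem ae_abs_XGamma_le {μ : Measure ℝ} (hΓ : 0 ≤ Γ) (hA : AEDisjoint μ A₁ A₂) :
    ∀ᵐ β ∂μ, |XGamma Γ y₁ y₂ A₁ A₂ β| ≤ Γ :=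
  (measure_eq_zero_iff_ae_notMem.1 hA).mono fun _ => abs_XGamma_le hΓ

theorem setIntegral_XGamma {μ : Measure ℝ} {s : Set ℝ} (hA₁ : MeasurableSet A₁)
    (hA₂ : MeasurableSet A₂) (hs : μ s ≠ ∞) :
    ∫ β in s, XGamma Γ y₁ y₂ A₁ A₂ β ∂μ
      = Γ * Real.sign y₁ * μ.real (s ∩ A₁) + Γ * Real.sign y₂ * μ.real (s ∩ A₂) := by
  have hint {A : Set ℝ} (hA : MeasurableSet A) : IntegrableOn (A.indicator fun _ => (1 : ℝ)) s μ :=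
    (integrableOn_const hs).indicator hA
  simp only [XGamma]
  rw [integral_add ((hint hA₁).const_mul _) ((hint hA₂).const_mul _), integral_const_mul,
    integral_const_mul, setIntegral_indicator hA₁, setIntegral_indicator hA₂, setIntegral_const,
    setIntegral_const, smul_eq_mul, smul_eq_mul, mul_one, mul_one]

theorem support_XGamma_subset : support (XGamma Γ y₁ y₂ A₁ A₂) ⊆ A₁ ∪ A₂ := by
  intro β hβ
  by_contra h
  rw [mem_union, not_or] at h
  exact hβ (by simp [XGamma, h.1, h.2])

end XGamma

/-- The constraints of `(P₀)`; the two integrals are the coordinates of `∫ h(β) X(β) dβ`. -/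
def L0Feasible (Γ y₁ y₂ : ℝ) (X : ℝ → ℝ) : Prop :=
  Measurable X ∧ (∀ᵐ β ∂(volume.restrict (Icc (0 : ℝ) 1)), |X β| ≤ Γ) ∧
    (∫ β in Icc (0 : ℝ) (1 / 2), X β) = y₁ ∧ (∫ β in Icc (1 / 2 : ℝ) 1, X β) = y₂

def l0Norm (X : ℝ → ℝ) : ℝ :=
  volume.real (Icc (0 : ℝ) 1 ∩ support X)

section L0Problem

variable {Γ y₁ y₂ : ℝ}

theorem L0Feasible.abs_add_abs_le_mul_l0Norm {X : ℝ → ℝ} (hX : L0Feasible Γ y₁ y₂ X) :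
    |y₁| + |y₂| ≤ Γ * l0Norm X := by
  obtain ⟨hm, hb, rfl, rfl⟩ := hX
  have hunion : Icc (0 : ℝ) (1 / 2) ∪ Icc (1 / 2) 1 = Icc 0 1 :=
    Icc_union_Icc_eq_Icc (by norm_num) (by norm_num)
  have h := abs_add_abs_setIntegral_le_mul_measureReal_inter_support hm measurableSet_Icc
    measurableSet_Icc (aedisjoint_of_subset_Icc_of_subset_Icc subset_rfl subset_rfl)
    measure_Icc_lt_top.ne measure_Icc_lt_top.ne (hunion ▸ hb)
  rwa [hunion] at h

theorem l0Feasible_XGamma {A₁ A₂ : Set ℝ} (hΓ : 0 < Γ) (hA₁ : MeasurableSet A₁)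
    (hA₂ : MeasurableSet A₂) (hs₁ : A₁ ⊆ Icc (0 : ℝ) (1 / 2)) (hs₂ : A₂ ⊆ Icc (1 / 2 : ℝ) 1)
    (hv₁ : volume A₁ = ENNReal.ofReal (|y₁| / Γ)) (hv₂ : volume A₂ = ENNReal.ofReal (|y₂| / Γ)) :
    L0Feasible Γ y₁ y₂ (XGamma Γ y₁ y₂ A₁ A₂) := by
  have hweight (y : ℝ) : Γ * Real.sign y * (|y| / Γ) = y := by
    field_simp
    linear_combination Real.sign_mul_abs y
  have hnull {s t : Set ℝ} (h : AEDisjoint volume s t) : volume.real (s ∩ t) = 0 := by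
    rw [measureReal_def, h.eq, ENNReal.toReal_zero]
  refine ⟨measurable_XGamma hA₁ hA₂,
    ae_restrict_of_ae (ae_abs_XGamma_le hΓ.le (aedisjoint_of_subset_Icc_of_subset_Icc hs₁ hs₂)),
    ?_, ?_⟩
  · rw [setIntegral_XGamma hA₁ hA₂ measure_Icc_lt_top.ne, inter_eq_right.2 hs₁,
      hnull (aedisjoint_of_subset_Icc_of_subset_Icc subset_rfl hs₂),
      measureReal_eq_of_eq_ofReal (by positivity) hv₁, hweight, mul_zero, add_zero]
  · rw [setIntegral_XGamma hA₁ hA₂ measure_Icc_lt_top.ne, inter_eq_right.2 hs₂, inter_comm,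
      hnull (aedisjoint_of_subset_Icc_of_subset_Icc hs₁ subset_rfl),
      measureReal_eq_of_eq_ofReal (by positivity) hv₂, hweight, mul_zero, zero_add]

theorem l0Norm_XGamma_le {A₁ A₂ : Set ℝ} (hΓ : 0 < Γ) (hv₁ : volume A₁ = ENNReal.ofReal (|y₁| / Γ))
    (hv₂ : volume A₂ = ENNReal.ofReal (|y₂| / Γ)) :
    l0Norm (XGamma Γ y₁ y₂ A₁ A₂) ≤ (|y₁| + |y₂|) / Γ := by
  have hfin : volume (A₁ ∪ A₂) ≠ ∞ :=
    measure_union_ne_top (by simp [hv₁]) (by simp [hv₂])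
  calc l0Norm (XGamma Γ y₁ y₂ A₁ A₂)
      ≤ volume.real (A₁ ∪ A₂) := measureReal_mono (inter_subset_right.trans support_XGamma_subset) hfin
    _ ≤ volume.real A₁ + volume.real A₂ := measureReal_union_le _ _
    _ = |y₁| / Γ + |y₂| / Γ := by
      rw [measureReal_eq_of_eq_ofReal (by positivity) hv₁,
        measureReal_eq_of_eq_ofReal (by positivity) hv₂]
    _ = (|y₁| + |y₂|) / Γ := (add_div _ _ _).symm

end L0Problem

/-- **Optimal value of the example L0 problem.**  For `Γ > 0` and `|y₁|, |y₂| < Γ/2`, the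
infimum of `‖X‖_{L0} = 𝔪({β ∈ [0,1] : X(β) ≠ 0})` over measurable `X : [0,1] → ℝ` with
`|X(β)| ≤ Γ` a.e., `∫₀^{1/2} X = y₁`, and `∫_{1/2}^1 X = y₂` equals `(|y₁| + |y₂|)/Γ`;
it is attained by `X_Γ = Γ·sign(y₁)·1_{A₁} + Γ·sign(y₂)·1_{A₂}` for any measurable
`A₁ ⊆ [0, 1/2]`, `A₂ ⊆ [1/2, 1]` with `𝔪(A₁) = |y₁|/Γ` and `𝔪(A₂) = |y₂|/Γ`. -/
theorem example_L0_value
    (Γ y₁ y₂ : ℝ) (hΓ : 0 < Γ) (h₁ : |y₁| < Γ / 2) (h₂ : |y₂| < Γ / 2) :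
    IsLeast {c : ℝ | ∃ X : ℝ → ℝ, Measurable X ∧
        (∀ᵐ β ∂(volume.restrict (Set.Icc (0 : ℝ) 1)), |X β| ≤ Γ) ∧
        (∫ β in Set.Icc (0 : ℝ) (1 / 2), X β) = y₁ ∧
        (∫ β in Set.Icc (1 / 2 : ℝ) 1, X β) = y₂ ∧
        c = (volume {β | β ∈ Set.Icc (0 : ℝ) 1 ∧ X β ≠ 0}).toReal}
      ((|y₁| + |y₂|) / Γ) ∧
    ∀ A₁ A₂ : Set ℝ, MeasurableSet A₁ → MeasurableSet A₂ →
      A₁ ⊆ Set.Icc (0 : ℝ) (1 / 2) → A₂ ⊆ Set.Icc (1 / 2 : ℝ) 1 →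
      volume A₁ = ENNReal.ofReal (|y₁| / Γ) → volume A₂ = ENNReal.ofReal (|y₂| / Γ) →
      Measurable (XGamma Γ y₁ y₂ A₁ A₂) ∧
      (∀ᵐ β ∂(volume.restrict (Set.Icc (0 : ℝ) 1)), |XGamma Γ y₁ y₂ A₁ A₂ β| ≤ Γ) ∧
      (∫ β in Set.Icc (0 : ℝ) (1 / 2), XGamma Γ y₁ y₂ A₁ A₂ β) = y₁ ∧
      (∫ β in Set.Icc (1 / 2 : ℝ) 1, XGamma Γ y₁ y₂ A₁ A₂ β) = y₂ ∧
      (volume {β | β ∈ Set.Icc (0 : ℝ) 1 ∧ XGamma Γ y₁ y₂ A₁ A₂ β ≠ 0}).toReal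
        = (|y₁| + |y₂|) / Γ := by
  have lower (X : ℝ → ℝ) (hX : L0Feasible Γ y₁ y₂ X) : (|y₁| + |y₂|) / Γ ≤ l0Norm X :=
    (div_le_iff₀' hΓ).2 hX.abs_add_abs_le_mul_l0Norm
  have attain (A₁ A₂ : Set ℝ) (hA₁ : MeasurableSet A₁) (hA₂ : MeasurableSet A₂)
      (hs₁ : A₁ ⊆ Icc (0 : ℝ) (1 / 2)) (hs₂ : A₂ ⊆ Icc (1 / 2 : ℝ) 1)
      (hv₁ : volume A₁ = ENNReal.ofReal (|y₁| / Γ)) (hv₂ : volume A₂ = ENNReal.ofReal (|y₂| / Γ)) :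
      L0Feasible Γ y₁ y₂ (XGamma Γ y₁ y₂ A₁ A₂) ∧
        l0Norm (XGamma Γ y₁ y₂ A₁ A₂) = (|y₁| + |y₂|) / Γ :=
    have hX := l0Feasible_XGamma hΓ hA₁ hA₂ hs₁ hs₂ hv₁ hv₂
    ⟨hX, (l0Norm_XGamma_le hΓ hv₁ hv₂).antisymm (lower _ hX)⟩
  have hr₁ : |y₁| / Γ ≤ 1 / 2 := by rw [div_le_iff₀ hΓ]; linarith
  have hr₂ : 1 / 2 + |y₂| / Γ ≤ 1 := by rw [← le_sub_iff_add_le', div_le_iff₀ hΓ]; linarith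
  obtain ⟨⟨hm, hb, hi₁, hi₂⟩, hnorm⟩ := attain (Icc 0 (|y₁| / Γ)) (Icc (1 / 2) (1 / 2 + |y₂| / Γ))
    measurableSet_Icc measurableSet_Icc (Icc_subset_Icc_right hr₁) (Icc_subset_Icc_right hr₂)
    (by rw [Real.volume_Icc, sub_zero]) (by rw [Real.volume_Icc, add_sub_cancel_left])
  refine ⟨⟨⟨_, hm, hb, hi₁, hi₂, hnorm.symm⟩, ?_⟩, fun A₁ A₂ hA₁ hA₂ hs₁ hs₂ hv₁ hv₂ => ?_⟩
  · rintro c ⟨X, hm, hb, hi₁, hi₂, rfl⟩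
    exact lower X ⟨hm, hb, hi₁, hi₂⟩
  · obtain ⟨⟨hm, hb, hi₁, hi₂⟩, hnorm⟩ := attain A₁ A₂ hA₁ hA₂ hs₁ hs₂ hv₁ hv₂
    exact ⟨hm, hb, hi₁, hi₂, hnorm⟩
end
end
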